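/- In Γ = F₂ × F₂ × ℤ with free generators a, b of the first factor, c, d of the second factor, and e generating the ℤ factor, let L = ⟨a, c, d⟩ and K = ⟨a, b², c, d⟩. Then ⟨a⟩ ≅ ℤ is central in L, L is q-normal in K, and K is q-normal in Γ; moreover L is not normal in K and K is not normal in Γ. -/
import Mathlib


def conjSet {Γ : Type*} [Group Γ] (s : Γ) (A : Set Γ) : Set Γ :=
  (fun x => s * x * s⁻¹) '' A

def IsQNormalIn {Γ : Type*} [Group Γ] (H K : Subgroup Γ) : Prop :=
  H ≤ K ∧ ∃ S : Set Γ, S ⊆ K ∧ Subgroup.closure S = K ∧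
    ∀ s ∈ S, (conjSet s (H : Set Γ) ∩ (H : Set Γ)).Infinite

/-- The ambient group `Γ = F₂ × F₂ × ℤ`. -/
abbrev GammaEx : Type := FreeGroup Bool × FreeGroup Bool × Multiplicative ℤ

namespace GammaEx

def a : GammaEx := (FreeGroup.of true, 1, 1)
def b : GammaEx := (FreeGroup.of false, 1, 1)
def c : GammaEx := (1, FreeGroup.of true, 1)
def d : GammaEx := (1, FreeGroup.of false, 1)

def L : Subgroup GammaEx := Subgroup.closure {a, c, d}
def K : Subgroup GammaEx := Subgroup.closure {a, b * b, c, d}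

end GammaEx

namespace QNormalAux

open GammaEx Multiplicative

/-- The `ℤ`-generator of the last factor. -/
def e : GammaEx := (1, 1, Multiplicative.ofAdd 1)

lemma ofAdd_one_zpow (m : ℤ) : (Multiplicative.ofAdd (1:ℤ)) ^ m = Multiplicative.ofAdd m := by
  rw [← ofAdd_zsmul]; simp

/-- Detecting the exponent of `a`. -/
def χ₁ : GammaEx →* Multiplicative ℤ :=
  (FreeGroup.lift fun _ => Multiplicative.ofAdd (1:ℤ)).comp (MonoidHom.fst _ _)

/-- Detecting the exponent of `c`. -/
def χ₂ : GammaEx →* Multiplicative ℤ :=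
  ((FreeGroup.lift fun _ => Multiplicative.ofAdd (1:ℤ)).comp (MonoidHom.fst _ _)).comp
    (MonoidHom.snd _ _)

lemma inj_zpow_of_hom {G : Type*} [Group G] {g : G} (f : G →* Multiplicative ℤ)
    (hf : f g = Multiplicative.ofAdd 1) : Function.Injective (fun n : ℤ => g ^ n) := by
  intro m n h
  have h2 : f g ^ m = f g ^ n := by
    have := congrArg f h
    simpa [map_zpow] using this
  rw [hf, ofAdd_one_zpow, ofAdd_one_zpow] at h2
  exact Multiplicative.ofAdd.injective h2

lemma χ₁_a : χ₁ a = Multiplicative.ofAdd 1 := by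
  simp [χ₁, a]

lemma χ₂_c : χ₂ c = Multiplicative.ofAdd 1 := by
  simp [χ₂, c]

lemma a_inj : Function.Injective (fun n : ℤ => a ^ n) := inj_zpow_of_hom χ₁ χ₁_a
lemma c_inj : Function.Injective (fun n : ℤ => c ^ n) := inj_zpow_of_hom χ₂ χ₂_c

lemma comm_ac : a * c = c * a := by simp [a, c, Prod.mk_mul_mk]
lemma comm_ad : a * d = d * a := by simp [a, d, Prod.mk_mul_mk]
lemma comm_bc : b * c = c * b := by simp [b, c, Prod.mk_mul_mk]
lemma comm_bbc : (b * b) * c = c * (b * b) := by simp [b, c, Prod.mk_mul_mk]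
lemma comm_ea : e * a = a * e := by simp [e, a, Prod.mk_mul_mk]

lemma infinite_inter {s t : GammaEx} {H : Subgroup GammaEx}
    (ht : t ∈ H) (hcomm : s * t = t * s)
    (hinj : Function.Injective (fun n : ℤ => t ^ n)) :
    (conjSet s (H : Set GammaEx) ∩ (H : Set GammaEx)).Infinite := by
  apply Set.infinite_of_injective_forall_mem (f := fun n : ℤ => t ^ n) hinj
  intro n
  have hc : Commute s t := hcomm
  have hzn : s * t ^ n * s⁻¹ = t ^ n := by
    rw [mul_inv_eq_iff_eq_mul]
    exact (hc.zpow_right n).eq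
  refine ⟨⟨t ^ n, H.zpow_mem ht n, hzn⟩, H.zpow_mem ht n⟩

/-- The subgroup `{1, s}` for an involution `s`. -/
def pairSubgroup {G : Type*} [Group G] (s : G) (hs : s * s = 1) : Subgroup G where
  carrier := {1, s}
  one_mem' := Or.inl rfl
  mul_mem' := by
    rintro x y (rfl | rfl) (rfl | rfl) <;> simp_all
  inv_mem' := by
    have hsinv : s⁻¹ = s := by
      rw [inv_eq_iff_mul_eq_one]; exact hs
    rintro x (rfl | rfl) <;> simp_all

lemma mem_pair {G : Type*} [Group G] {s x : G} (hs : s * s = 1)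
    (hx : x ∈ pairSubgroup s hs) : x = 1 ∨ x = s := hx

open Equiv in
/-- First-factor evaluation sending `a ↦ swap 0 1` and `b ↦` a 3-cycle. -/
def φ : GammaEx →* Equiv.Perm (Fin 3) :=
  (FreeGroup.lift fun t => if t then Equiv.swap (0:Fin 3) 1
      else Equiv.swap (0:Fin 3) 1 * Equiv.swap (1:Fin 3) 2).comp (MonoidHom.fst _ _)

open Equiv in
/-- First-factor evaluation sending `a ↦ swap 0 1` and `b ↦ swap 1 2`. -/
def ψ : GammaEx →* Equiv.Perm (Fin 3) :=
  (FreeGroup.lift fun t => if t then Equiv.swap (0:Fin 3) 1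
      else Equiv.swap (1:Fin 3) 2).comp (MonoidHom.fst _ _)

lemma φ_a : φ a = Equiv.swap 0 1 := by simp [φ, a]
lemma φ_b : φ b = Equiv.swap (0:Fin 3) 1 * Equiv.swap (1:Fin 3) 2 := by simp [φ, b]
lemma φ_c : φ c = 1 := by simp [φ, c]
lemma φ_d : φ d = 1 := by simp [φ, d]
lemma ψ_a : ψ a = Equiv.swap 0 1 := by simp [ψ, a]
lemma ψ_b : ψ b = Equiv.swap (1:Fin 3) 2 := by simp [ψ, b]
lemma ψ_c : ψ c = 1 := by simp [ψ, c]
lemma ψ_d : ψ d = 1 := by simp [ψ, d]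

lemma swap_sq : Equiv.swap (0:Fin 3) 1 * Equiv.swap (0:Fin 3) 1 = 1 := by decide

end QNormalAux

open GammaEx QNormalAux in
/-- In `Γ = F₂ × F₂ × ℤ`, with `L = ⟨a, c, d⟩` and `K = ⟨a, b², c, d⟩`:
`⟨a⟩ ≅ ℤ` is central in `L`, `L ≤_q K ≤_q Γ`, yet `L` is not normal in `K` and
`K` is not normal in `Γ`. -/
theorem f2_f2_z_example :
    Nonempty (Multiplicative ℤ ≃* Subgroup.zpowers a) ∧
    (∀ x ∈ L, a * x = x * a) ∧
    IsQNormalIn L K ∧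
    IsQNormalIn K ⊤ ∧
    ¬ (∀ k ∈ K, ∀ x ∈ L, k * x * k⁻¹ ∈ L) ∧
    ¬ K.Normal := by
  have ha_mem_K : a ∈ K := Subgroup.subset_closure (by simp)
  have hbb_mem_K : b * b ∈ K := Subgroup.subset_closure (by simp)
  have hc_mem_K : c ∈ K := Subgroup.subset_closure (by simp)
  have hd_mem_K : d ∈ K := Subgroup.subset_closure (by simp)
  have ha_mem_L : a ∈ L := Subgroup.subset_closure (by simp)
  have hc_mem_L : c ∈ L := Subgroup.subset_closure (by simp)
  refine ⟨?_, ?_, ?_, ?_, ?_, ?_⟩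
  · -- ℤ ≅ zpowers a
    refine ⟨MulEquiv.ofBijective
      (((zpowersHom GammaEx) a).codRestrict (Subgroup.zpowers a)
        (fun n => Subgroup.mem_zpowers_iff.mpr ⟨Multiplicative.toAdd n, rfl⟩)) ⟨?_, ?_⟩⟩
    · intro m n h
      have h' : a ^ (Multiplicative.toAdd m) = a ^ (Multiplicative.toAdd n) :=
        congrArg Subtype.val h
      have := a_inj h'
      exact Multiplicative.toAdd.injective this
    · rintro ⟨x, hx⟩
      obtain ⟨n, rfl⟩ := Subgroup.mem_zpowers_iff.mp hx
      exact ⟨Multiplicative.ofAdd n, Subtype.ext rfl⟩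
  · -- a is central in L
    intro x hx
    have hL : L ≤ Subgroup.centralizer {a} := by
      rw [L, Subgroup.closure_le]
      rintro x hx
      simp only [Set.mem_insert_iff, Set.mem_singleton_iff] at hx
      rcases hx with rfl | rfl | rfl
      · exact Subgroup.mem_centralizer_iff.mpr (by rintro g rfl; rfl)
      · exact Subgroup.mem_centralizer_iff.mpr (by rintro g rfl; exact comm_ac)
      · exact Subgroup.mem_centralizer_iff.mpr (by rintro g rfl; exact comm_ad)
    exact Subgroup.mem_centralizer_iff.mp (hL hx) a rfl
  · -- L q-normal in K
    refine ⟨?_, {a, b * b, c, d}, ?_, rfl, ?_⟩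
    · rw [L, Subgroup.closure_le]
      rintro x hx
      simp only [Set.mem_insert_iff, Set.mem_singleton_iff] at hx
      rcases hx with rfl | rfl | rfl
      exacts [ha_mem_K, hc_mem_K, hd_mem_K]
    · rintro x hx
      simp only [Set.mem_insert_iff, Set.mem_singleton_iff] at hx
      rcases hx with rfl | rfl | rfl | rfl
      exacts [ha_mem_K, hbb_mem_K, hc_mem_K, hd_mem_K]
    · rintro s hs
      simp only [Set.mem_insert_iff, Set.mem_singleton_iff] at hs
      rcases hs with rfl | rfl | rfl | rfl
      · exact infinite_inter hc_mem_L comm_ac c_inj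
      · exact infinite_inter hc_mem_L comm_bbc c_inj
      · exact infinite_inter ha_mem_L comm_ac.symm a_inj
      · exact infinite_inter ha_mem_L comm_ad.symm a_inj
  · -- K q-normal in ⊤
    refine ⟨le_top, {a, b, c, d, e}, fun x _ => Subgroup.mem_top x, ?_, ?_⟩
    · -- closure {a,b,c,d,e} = ⊤
      rw [eq_top_iff]
      rintro ⟨x₁, x₂, x₃⟩ -
      set S : Set GammaEx := {a, b, c, d, e} with hS
      have ha' : a ∈ Subgroup.closure S := Subgroup.subset_closure (by simp [hS])
      have hb' : b ∈ Subgroup.closure S := Subgroup.subset_closure (by simp [hS])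
      have hc' : c ∈ Subgroup.closure S := Subgroup.subset_closure (by simp [hS])
      have hd' : d ∈ Subgroup.closure S := Subgroup.subset_closure (by simp [hS])
      have he' : e ∈ Subgroup.closure S := Subgroup.subset_closure (by simp [hS])
      have h1 : ∀ w : FreeGroup Bool,
          ((w, 1, 1) : GammaEx) ∈ Subgroup.closure S := by
        intro w
        set j : FreeGroup Bool →* GammaEx :=
          MonoidHom.inl (FreeGroup Bool) (FreeGroup Bool × Multiplicative ℤ) with hj
        have key : Subgroup.closure (Set.range (FreeGroup.of : Bool → FreeGroup Bool)) ≤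
            (Subgroup.closure S).comap j := by
          rw [Subgroup.closure_le]
          rintro x ⟨(tt | ff), rfl⟩
          · exact hb'
          · exact ha'
        have hw : w ∈ (Subgroup.closure S).comap j := by
          apply key
          rw [FreeGroup.closure_range_of]
          trivial
        exact hw
      have h2 : ∀ w : FreeGroup Bool,
          ((1, w, 1) : GammaEx) ∈ Subgroup.closure S := by
        intro w
        set j : FreeGroup Bool →* GammaEx :=
          (MonoidHom.inr (FreeGroup Bool) (FreeGroup Bool × Multiplicative ℤ)).comp
            (MonoidHom.inl (FreeGroup Bool) (Multiplicative ℤ)) with hj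
        have key : Subgroup.closure (Set.range (FreeGroup.of : Bool → FreeGroup Bool)) ≤
            (Subgroup.closure S).comap j := by
          rw [Subgroup.closure_le]
          rintro x ⟨(tt | ff), rfl⟩
          · exact hd'
          · exact hc'
        have hw : w ∈ (Subgroup.closure S).comap j := by
          apply key
          rw [FreeGroup.closure_range_of]
          trivial
        exact hw
      have h3 : ((1, 1, x₃) : GammaEx) ∈ Subgroup.closure S := by
        have he3 : e ^ (Multiplicative.toAdd x₃) = ((1, 1, x₃) : GammaEx) := by
          simp only [e, Prod.pow_mk]
          rw [ofAdd_one_zpow]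
          simp
        exact he3 ▸ Subgroup.zpow_mem _ he' _
      have : ((x₁, x₂, x₃) : GammaEx) = (x₁, 1, 1) * (1, x₂, 1) * (1, 1, x₃) := by
        simp [Prod.mk_mul_mk]
      rw [this]
      exact Subgroup.mul_mem _ (Subgroup.mul_mem _ (h1 x₁) (h2 x₂)) h3
    · rintro s hs
      simp only [Set.mem_insert_iff, Set.mem_singleton_iff] at hs
      rcases hs with rfl | rfl | rfl | rfl | rfl
      · exact infinite_inter hc_mem_K comm_ac c_inj
      · exact infinite_inter hc_mem_K comm_bc c_inj
      · exact infinite_inter ha_mem_K comm_ac.symm a_inj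
      · exact infinite_inter ha_mem_K comm_ad.symm a_inj
      · exact infinite_inter ha_mem_K comm_ea a_inj
  · -- L not normal in K
    intro h
    have hw : (b * b) * a * (b * b)⁻¹ ∈ L := h (b * b) hbb_mem_K a ha_mem_L
    have hLsub : L ≤ (pairSubgroup (Equiv.swap (0:Fin 3) 1) swap_sq).comap φ := by
      rw [L, Subgroup.closure_le]
      rintro x hx
      simp only [Set.mem_insert_iff, Set.mem_singleton_iff] at hx
      simp only [SetLike.mem_coe, Subgroup.mem_comap]
      rcases hx with rfl | rfl | rfl
      · rw [φ_a]; exact Or.inr rfl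
      · rw [φ_c]; exact Or.inl rfl
      · rw [φ_d]; exact Or.inl rfl
    have hmem : φ ((b * b) * a * (b * b)⁻¹) ∈ pairSubgroup (Equiv.swap (0:Fin 3) 1) swap_sq :=
      hLsub hw
    rw [map_mul, map_mul, map_inv, map_mul, φ_a, φ_b] at hmem
    have := mem_pair swap_sq hmem
    revert this
    decide
  · -- K not normal
    intro hn
    have hw : b * a * b⁻¹ ∈ K := hn.conj_mem a ha_mem_K b
    have hKsub : K ≤ (pairSubgroup (Equiv.swap (0:Fin 3) 1) swap_sq).comap ψ := by
      rw [K, Subgroup.closure_le]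
      rintro x hx
      simp only [Set.mem_insert_iff, Set.mem_singleton_iff] at hx
      simp only [SetLike.mem_coe, Subgroup.mem_comap]
      rcases hx with rfl | rfl | rfl | rfl
      · rw [ψ_a]; exact Or.inr rfl
      · have h1 : ψ (b * b) = 1 := by rw [map_mul, ψ_b]; decide
        rw [h1]; exact Or.inl rfl
      · rw [ψ_c]; exact Or.inl rfl
      · rw [ψ_d]; exact Or.inl rfl
    have hmem : ψ (b * a * b⁻¹) ∈ pairSubgroup (Equiv.swap (0:Fin 3) 1) swap_sq := hKsub hw
    rw [map_mul, map_mul, map_inv, ψ_a, ψ_b] at hmem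
    have := mem_pair swap_sq hmem
    revert this
    decide
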